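/- With the matching M on 2^[n+2] defined from I = (u_1, u_2, x_1^{e_1},...,x_n^{e_n}) as above, the directed graph G_I^M (Hasse diagram of 2^[n+2] with downward edges, and the edges of M reversed to point upward) contains no directed cycle. -/
import Mathlib


open Finset

def v1 {n : ℕ} : Fin 2 ⊕ Fin n := Sum.inl 0
def v2 {n : ℕ} : Fin 2 ⊕ Fin n := Sum.inl 1

/-- Generators of `I`: index `inl 0 ↦ u₁` (exponents `a`), `inl 1 ↦ u₂` (exponents `b`),
`inr i ↦ x_i^{e_i}`; monomials modeled as exponent vectors. -/
def gen {n : ℕ} (a b e : Fin n → ℕ) : Fin 2 ⊕ Fin n → Fin n → ℕ :=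
  Sum.elim (fun t => if t = 0 then a else b) (fun i j => if j = i then e i else 0)

/-- The lcm label `m_T` of a subset of generators (pointwise max of exponent vectors). -/
def mT {n : ℕ} (a b e : Fin n → ℕ) (T : Finset (Fin 2 ⊕ Fin n)) : Fin n → ℕ :=
  fun i => T.sup fun k => gen a b e k i

def P0 {n : ℕ} (a b : Fin n → ℕ) : Finset (Fin 2 ⊕ Fin n) :=
  (Finset.univ.filter fun i => a i = b i).image Sum.inr

def P1 {n : ℕ} (a b : Fin n → ℕ) : Finset (Fin 2 ⊕ Fin n) :=
  (Finset.univ.filter fun i => b i < a i).image Sum.inr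

def P2 {n : ℕ} (a b : Fin n → ℕ) : Finset (Fin 2 ⊕ Fin n) :=
  (Finset.univ.filter fun i => a i < b i).image Sum.inr

def setA {n : ℕ} (a : Fin n → ℕ) : Finset (Fin 2 ⊕ Fin n) :=
  (Finset.univ.filter fun i => 0 < a i).image Sum.inr

def setB {n : ℕ} (b : Fin n → ℕ) : Finset (Fin 2 ⊕ Fin n) :=
  (Finset.univ.filter fun i => 0 < b i).image Sum.inr

/-- The matching `M` on the Hasse diagram of `2^[n+2]`: `MM a b T T'` means `(T,T')` is an
edge of the matching, given by the four families of the paper. -/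
def MM {n : ℕ} (a b : Fin n → ℕ) (T T' : Finset (Fin 2 ⊕ Fin n)) : Prop :=
  (v1 ∈ T ∧ v2 ∈ T ∧ P1 a b ⊆ T ∧ T' = T.erase v1) ∨
  (v1 ∈ T ∧ v2 ∈ T ∧ ¬ P1 a b ⊆ T ∧ P2 a b ⊆ T ∧ T' = T.erase v2) ∨
  (v1 ∈ T ∧ v2 ∉ T ∧ setA a ⊆ T ∧ T' = T.erase v1) ∨
  (v1 ∉ T ∧ v2 ∈ T ∧ setB b ⊆ T ∧ T ≠ Finset.univ.erase v1 ∧ T' = T.erase v2)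

/-- `T` is an `M`-critical vertex: it is incident to no edge of the matching. -/
def critical {n : ℕ} (a b : Fin n → ℕ) (T : Finset (Fin 2 ⊕ Fin n)) : Prop :=
  ∀ T', ¬ MM a b T T' ∧ ¬ MM a b T' T

/-- One step of the directed graph `G_I^M`: either a downward Hasse edge not in `M`, or a
reversed (upward) edge of `M`. -/
def step {n : ℕ} (a b : Fin n → ℕ) (X Y : Finset (Fin 2 ⊕ Fin n)) : Prop :=
  (Y ⊆ X ∧ X.card = Y.card + 1 ∧ ¬ MM a b X Y) ∨ MM a b Y X
def psi (p q r s x1 x2 : Bool) : Nat :=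
 match p, q, r, s, x1, x2 with
  | false, false, false, false, false, false => 0
  | false, false, false, false, false, true => 1
  | false, false, false, false, true, false => 2
  | false, false, false, false, true, true => 3
  | false, false, false, true, false, false => 1
  | false, false, false, true, false, true => 0
  | false, false, false, true, true, false => 2
  | false, false, false, true, true, true => 3
  | false, false, true, false, false, false => 1
  | false, false, true, false, false, true => 2
  | false, false, true, false, true, false => 0
  | false, false, true, false, true, true => 3
  | false, false, true, true, false, false => 2
  | false, false, true, true, false, true => 0
  | false, false, true, true, true, false => 1
  | false, false, true, true, true, true => 3
  | false, true, false, false, false, false => 0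
  | false, true, false, false, false, true => 1
  | false, true, false, false, true, false => 3
  | false, true, false, false, true, true => 2
  | false, true, false, true, false, false => 1
  | false, true, false, true, false, true => 0
  | false, true, false, true, true, false => 3
  | false, true, false, true, true, true => 2
  | false, true, true, false, false, false => 0
  | false, true, true, false, false, true => 0
  | false, true, true, false, true, false => 0
  | false, true, true, false, true, true => 0
  | false, true, true, true, false, false => 3
  | false, true, true, true, false, true => 0
  | false, true, true, true, true, false => 2
  | false, true, true, true, true, true => 1
  | true, false, false, false, false, false => 0
  | true, false, false, false, false, true => 3
  | true, false, false, false, true, false => 1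
  | true, false, false, false, true, true => 2
  | true, false, false, true, false, false => 0
  | true, false, false, true, false, true => 0
  | true, false, false, true, true, false => 0
  | true, false, false, true, true, true => 0
  | true, false, true, false, false, false => 1
  | true, false, true, false, false, true => 3
  | true, false, true, false, true, false => 0
  | true, false, true, false, true, true => 2
  | true, false, true, true, false, false => 3
  | true, false, true, true, false, true => 2
  | true, false, true, true, true, false => 0
  | true, false, true, true, true, true => 1
  | true, true, false, false, false, false => 0
  | true, true, false, false, false, true => 2
  | true, true, false, false, true, false => 3
  | true, true, false, false, true, true => 1
  | true, true, false, true, false, false => 2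
  | true, true, false, true, false, true => 1
  | true, true, false, true, true, false => 3
  | true, true, false, true, true, true => 0
  | true, true, true, false, false, false => 2
  | true, true, true, false, false, true => 3
  | true, true, true, false, true, false => 1
  | true, true, true, false, true, true => 0
  | true, true, true, true, false, false => 3
  | true, true, true, true, false, true => 1
  | true, true, true, true, true, false => 2
  | true, true, true, true, true, true => 0

lemma psi_lt (p q r s x1 x2 : Bool) : psi p q r s x1 x2 < 4 := by
  cases p <;> cases q <;> cases r <;> cases s <;> cases x1 <;> cases x2 <;> decide

lemma psi_spec (p q r s : Bool) (hA : q = true → r = true → s = true)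
    (hB : p = true → s = true → r = true) :
    (p = true → psi p q r s true true < psi p q r s false true) ∧
    (p = false → psi p q r s false true < psi p q r s true true) ∧
    (q = true → psi p q r s true true < psi p q r s true false) ∧
    (q = false → psi p q r s true false < psi p q r s true true) ∧
    (r = true → psi p q r s true false < psi p q r s false false) ∧
    (r = false → psi p q r s false false < psi p q r s true false) ∧
    (s = true → psi p q r s false true < psi p q r s false false) ∧
    (s = false → psi p q r s false false < psi p q r s false true) := by
  revert hA hB; cases p <;> cases q <;> cases r <;> cases s <;> decide

section Aux

variable {n : ℕ}

/-- The `inr`-part of a vertex. -/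
def Sset (T : Finset (Fin 2 ⊕ Fin n)) : Finset (Fin 2 ⊕ Fin n) := (T.erase v1).erase v2

lemma v1_ne_v2 : (v1 : Fin 2 ⊕ Fin n) ≠ v2 := by simp [v1, v2]

lemma v1_notMem_inr_image (f : Fin n → Prop) [DecidablePred f] :
    (v1 : Fin 2 ⊕ Fin n) ∉ (Finset.univ.filter f).image Sum.inr := by
  simp [v1]

lemma v2_notMem_inr_image (f : Fin n → Prop) [DecidablePred f] :
    (v2 : Fin 2 ⊕ Fin n) ∉ (Finset.univ.filter f).image Sum.inr := by
  simp [v2]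

lemma Sset_erase_v1 (T : Finset (Fin 2 ⊕ Fin n)) : Sset (T.erase v1) = Sset T := by
  simp [Sset, Finset.erase_idem]

lemma Sset_erase_v2 (T : Finset (Fin 2 ⊕ Fin n)) : Sset (T.erase v2) = Sset T := by
  rw [Sset, Sset, Finset.erase_right_comm, Finset.erase_idem, Finset.erase_right_comm]

lemma Sset_erase_inr (T : Finset (Fin 2 ⊕ Fin n)) (i : Fin n) :
    Sset (T.erase (Sum.inr i)) = (Sset T).erase (Sum.inr i) := by
  rw [Sset, Sset, Finset.erase_right_comm (a := Sum.inr i), Finset.erase_right_comm (a := Sum.inr i)]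

lemma subset_Sset_iff {U T : Finset (Fin 2 ⊕ Fin n)} (h1 : v1 ∉ U) (h2 : v2 ∉ U) :
    U ⊆ Sset T ↔ U ⊆ T := by
  unfold Sset
  rw [Finset.subset_erase, Finset.subset_erase]
  tauto

variable (a b : Fin n → ℕ)

lemma P1_subset_iff (T : Finset (Fin 2 ⊕ Fin n)) : P1 a b ⊆ Sset T ↔ P1 a b ⊆ T :=
  subset_Sset_iff (v1_notMem_inr_image _) (v2_notMem_inr_image _)

lemma P2_subset_iff (T : Finset (Fin 2 ⊕ Fin n)) : P2 a b ⊆ Sset T ↔ P2 a b ⊆ T :=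
  subset_Sset_iff (v1_notMem_inr_image _) (v2_notMem_inr_image _)

lemma setA_subset_iff (T : Finset (Fin 2 ⊕ Fin n)) : setA a ⊆ Sset T ↔ setA a ⊆ T :=
  subset_Sset_iff (v1_notMem_inr_image _) (v2_notMem_inr_image _)

lemma setB_subset_iff (T : Finset (Fin 2 ⊕ Fin n)) : setB b ⊆ Sset T ↔ setB b ⊆ T :=
  subset_Sset_iff (v1_notMem_inr_image _) (v2_notMem_inr_image _)

/-- The `s`-condition, expressed on the `inr`-part. -/
def sCond (S : Finset (Fin 2 ⊕ Fin n)) : Prop :=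
  setB b ⊆ S ∧ insert v2 S ≠ Finset.univ.erase v1

instance (S : Finset (Fin 2 ⊕ Fin n)) : Decidable (sCond b S) :=
  inferInstanceAs (Decidable (_ ∧ _))

lemma exclA (S : Finset (Fin 2 ⊕ Fin n)) (hq : ¬ P1 a b ⊆ S ∧ P2 a b ⊆ S)
    (hr : setA a ⊆ S) : sCond b S := by
  constructor
  · intro x hx
    simp only [setB, Finset.mem_image, Finset.mem_filter, Finset.mem_univ, true_and] at hx
    obtain ⟨i, hi, rfl⟩ := hx
    rcases Nat.eq_zero_or_pos (a i) with h0 | h0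
    · refine hq.2 ?_
      simp only [P2, Finset.mem_image, Finset.mem_filter, Finset.mem_univ, true_and]
      exact ⟨i, by omega, rfl⟩
    · refine hr ?_
      simp only [setA, Finset.mem_image, Finset.mem_filter, Finset.mem_univ, true_and]
      exact ⟨i, h0, rfl⟩
  · intro hfull
    refine hq.1 ?_
    intro x hx
    simp only [P1, Finset.mem_image, Finset.mem_filter, Finset.mem_univ, true_and] at hx
    obtain ⟨i, hi, rfl⟩ := hx
    have hx1 : (Sum.inr i : Fin 2 ⊕ Fin n) ∈ Finset.univ.erase v1 := by
      simp [v1]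
    rw [← hfull, Finset.mem_insert] at hx1
    rcases hx1 with h | h
    · simp [v2] at h
    · exact h

lemma exclB (S : Finset (Fin 2 ⊕ Fin n)) (hp : P1 a b ⊆ S) (hs : sCond b S) :
    setA a ⊆ S := by
  intro x hx
  simp only [setA, Finset.mem_image, Finset.mem_filter, Finset.mem_univ, true_and] at hx
  obtain ⟨i, hi, rfl⟩ := hx
  rcases Nat.eq_zero_or_pos (b i) with h0 | h0
  · refine hp ?_
    simp only [P1, Finset.mem_image, Finset.mem_filter, Finset.mem_univ, true_and]
    exact ⟨i, by omega, rfl⟩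
  · refine hs.1 ?_
    simp only [setB, Finset.mem_image, Finset.mem_filter, Finset.mem_univ, true_and]
    exact ⟨i, h0, rfl⟩

/-- The potential function. -/
def phi (T : Finset (Fin 2 ⊕ Fin n)) : ℕ :=
  4 * (Sset T).card +
    psi (decide (P1 a b ⊆ Sset T)) (decide (¬ P1 a b ⊆ Sset T ∧ P2 a b ⊆ Sset T))
      (decide (setA a ⊆ Sset T)) (decide (sCond b (Sset T)))
      (decide (v1 ∈ T)) (decide (v2 ∈ T))

lemma key (S : Finset (Fin 2 ⊕ Fin n)) :
    ∀ x1 x2 y1 y2 : Bool,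
    ((P1 a b ⊆ S ∧ x1 = false ∧ x2 = true ∧ y1 = true ∧ y2 = true) ∨
     (¬ P1 a b ⊆ S ∧ x1 = true ∧ x2 = true ∧ y1 = false ∧ y2 = true) ∨
     ((¬ P1 a b ⊆ S ∧ P2 a b ⊆ S) ∧ x1 = true ∧ x2 = false ∧ y1 = true ∧ y2 = true) ∨
     (¬ (¬ P1 a b ⊆ S ∧ P2 a b ⊆ S) ∧ x1 = true ∧ x2 = true ∧ y1 = true ∧ y2 = false) ∨
     (setA a ⊆ S ∧ x1 = false ∧ x2 = false ∧ y1 = true ∧ y2 = false) ∨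
     (¬ setA a ⊆ S ∧ x1 = true ∧ x2 = false ∧ y1 = false ∧ y2 = false) ∨
     (sCond b S ∧ x1 = false ∧ x2 = false ∧ y1 = false ∧ y2 = true) ∨
     (¬ sCond b S ∧ x1 = false ∧ x2 = true ∧ y1 = false ∧ y2 = false)) →
    psi (decide (P1 a b ⊆ S)) (decide (¬ P1 a b ⊆ S ∧ P2 a b ⊆ S))
      (decide (setA a ⊆ S)) (decide (sCond b S)) y1 y2 <
    psi (decide (P1 a b ⊆ S)) (decide (¬ P1 a b ⊆ S ∧ P2 a b ⊆ S))
      (decide (setA a ⊆ S)) (decide (sCond b S)) x1 x2 := by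
  intro x1 x2 y1 y2 h
  have hA : decide (¬ P1 a b ⊆ S ∧ P2 a b ⊆ S) = true → decide (setA a ⊆ S) = true →
      decide (sCond b S) = true := by
    simp only [decide_eq_true_eq]
    exact exclA a b S
  have hB : decide (P1 a b ⊆ S) = true → decide (sCond b S) = true →
      decide (setA a ⊆ S) = true := by
    simp only [decide_eq_true_eq]
    exact exclB a b S
  have spec := psi_spec _ _ _ _ hA hB
  rcases h with ⟨h, rfl, rfl, rfl, rfl⟩ | ⟨h, rfl, rfl, rfl, rfl⟩ | ⟨h, rfl, rfl, rfl, rfl⟩ |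
    ⟨h, rfl, rfl, rfl, rfl⟩ | ⟨h, rfl, rfl, rfl, rfl⟩ | ⟨h, rfl, rfl, rfl, rfl⟩ |
    ⟨h, rfl, rfl, rfl, rfl⟩ | ⟨h, rfl, rfl, rfl, rfl⟩
  · exact spec.1 (by simpa using h)
  · exact spec.2.1 (by simpa using h)
  · exact spec.2.2.1 (by simpa using h)
  · exact spec.2.2.2.1 (by simpa using h)
  · exact spec.2.2.2.2.1 (by simpa using h)
  · exact spec.2.2.2.2.2.1 (by simpa using h)
  · exact spec.2.2.2.2.2.2.1 (by simpa using h)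
  · exact spec.2.2.2.2.2.2.2 (by simpa using h)

end Aux

lemma phi_card_lt {c m1 m2 : ℕ} (hc : 0 < c) (h1 : m1 < 4) :
    4 * (c - 1) + m1 < 4 * c + m2 := by omega

lemma phi_step {n : ℕ} (a b : Fin n → ℕ) {X Y : Finset (Fin 2 ⊕ Fin n)}
    (h : step a b X Y) : phi a b Y < phi a b X := by
  rcases h with ⟨hYX, hcard, hnot⟩ | hup
  · -- downward Hasse edge not in M
    have hns : ¬ X ⊆ Y := by
      intro hs
      have := Finset.card_le_card hs
      omega
    obtain ⟨j, hjX, hjY⟩ := Finset.not_subset.mp hns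
    have hY : Y = X.erase j := by
      apply Finset.eq_of_subset_of_card_le (Finset.subset_erase.mpr ⟨hYX, hjY⟩)
      rw [Finset.card_erase_of_mem hjX]
      omega
    subst hY
    rcases j with k | i
    · have hk : (Sum.inl k : Fin 2 ⊕ Fin n) = v1 ∨ (Sum.inl k : Fin 2 ⊕ Fin n) = v2 := by
        fin_cases k
        · exact Or.inl rfl
        · exact Or.inr rfl
      rcases hk with hk | hk <;> rw [hk] at hjX hnot ⊢
      · -- removing v1
        by_cases h2 : v2 ∈ X
        · have hnp : ¬ P1 a b ⊆ Sset X := by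
            rw [P1_subset_iff]
            intro hP
            exact hnot (Or.inl ⟨hjX, h2, hP, rfl⟩)
          unfold phi
          rw [Sset_erase_v1]
          rw [show decide (v1 ∈ X.erase v1) = false by simp,
            show decide (v2 ∈ X.erase v1) = true by
              simp [Finset.mem_erase, h2, v1_ne_v2.symm],
            decide_eq_true hjX, decide_eq_true h2]
          exact Nat.add_lt_add_left
            (key a b (Sset X) _ _ _ _ (Or.inr (Or.inl ⟨hnp, rfl, rfl, rfl, rfl⟩))) _
        · have hnr : ¬ setA a ⊆ Sset X := by
            rw [setA_subset_iff]
            intro hA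
            exact hnot (Or.inr (Or.inr (Or.inl ⟨hjX, h2, hA, rfl⟩)))
          unfold phi
          rw [Sset_erase_v1]
          rw [show decide (v1 ∈ X.erase v1) = false by simp,
            show decide (v2 ∈ X.erase v1) = false by simp [Finset.mem_erase, h2],
            decide_eq_true hjX, decide_eq_false h2]
          exact Nat.add_lt_add_left
            (key a b (Sset X) _ _ _ _
              (Or.inr (Or.inr (Or.inr (Or.inr (Or.inr (Or.inl ⟨hnr, rfl, rfl, rfl, rfl⟩))))))) _
      · -- removing v2
        by_cases h1 : v1 ∈ X
        · have hnq : ¬ (¬ P1 a b ⊆ Sset X ∧ P2 a b ⊆ Sset X) := by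
            rw [P1_subset_iff, P2_subset_iff]
            intro hc
            exact hnot (Or.inr (Or.inl ⟨h1, hjX, hc.1, hc.2, rfl⟩))
          unfold phi
          rw [Sset_erase_v2]
          rw [show decide (v2 ∈ X.erase v2) = false by simp,
            show decide (v1 ∈ X.erase v2) = true by
              simp [Finset.mem_erase, h1, v1_ne_v2],
            decide_eq_true hjX, decide_eq_true h1]
          exact Nat.add_lt_add_left
            (key a b (Sset X) _ _ _ _
              (Or.inr (Or.inr (Or.inr (Or.inl ⟨hnq, rfl, rfl, rfl, rfl⟩))))) _
        · have hXS : insert v2 (Sset X) = X := by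
            rw [Sset, Finset.erase_eq_of_notMem h1]
            exact Finset.insert_erase hjX
          have hns' : ¬ sCond b (Sset X) := by
            rintro ⟨hB, hne⟩
            refine hnot (Or.inr (Or.inr (Or.inr ⟨h1, hjX, (setB_subset_iff b X).mp hB,
              ?_, rfl⟩)))
            intro hXe
            exact hne (hXS.trans hXe)
          unfold phi
          rw [Sset_erase_v2]
          rw [show decide (v2 ∈ X.erase v2) = false by simp,
            show decide (v1 ∈ X.erase v2) = false by simp [Finset.mem_erase, h1],
            decide_eq_true hjX, decide_eq_false h1]
          exact Nat.add_lt_add_left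
            (key a b (Sset X) _ _ _ _
              (Or.inr (Or.inr (Or.inr (Or.inr (Or.inr (Or.inr
                (Or.inr ⟨hns', rfl, rfl, rfl, rfl⟩)))))))) _
    · -- removing an inr element
      have hmem : (Sum.inr i : Fin 2 ⊕ Fin n) ∈ Sset X := by
        simp [Sset, Finset.mem_erase, v1, v2, hjX]
      have hc : 0 < (Sset X).card := Finset.card_pos.mpr ⟨_, hmem⟩
      unfold phi
      rw [Sset_erase_inr, Finset.card_erase_of_mem hmem]
      exact phi_card_lt hc (psi_lt _ _ _ _ _ _)
  · -- reversed edge of M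
    rcases hup with ⟨h1, h2, hP, hX⟩ | ⟨h1, h2, hnP, hP2, hX⟩ | ⟨h1, h2, hA, hX⟩ |
      ⟨h1, h2, hB, hne, hX⟩ <;> subst hX
    · unfold phi
      rw [Sset_erase_v1]
      rw [show decide (v1 ∈ Y.erase v1) = false by simp,
        show decide (v2 ∈ Y.erase v1) = true by
          simp [Finset.mem_erase, h2, v1_ne_v2.symm],
        decide_eq_true h1, decide_eq_true h2]
      exact Nat.add_lt_add_left
        (key a b (Sset Y) _ _ _ _ (Or.inl ⟨(P1_subset_iff a b Y).mpr hP, rfl, rfl, rfl, rfl⟩)) _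
    · unfold phi
      rw [Sset_erase_v2]
      rw [show decide (v2 ∈ Y.erase v2) = false by simp,
        show decide (v1 ∈ Y.erase v2) = true by
          simp [Finset.mem_erase, h1, v1_ne_v2],
        decide_eq_true h1, decide_eq_true h2]
      refine Nat.add_lt_add_left
        (key a b (Sset Y) _ _ _ _ (Or.inr (Or.inr (Or.inl ⟨⟨?_, ?_⟩, rfl, rfl, rfl, rfl⟩)))) _
      · rw [P1_subset_iff]; exact hnP
      · rw [P2_subset_iff]; exact hP2
    · unfold phi
      rw [Sset_erase_v1]
      rw [show decide (v1 ∈ Y.erase v1) = false by simp,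
        show decide (v2 ∈ Y.erase v1) = false by simp [Finset.mem_erase, h2],
        decide_eq_true h1, decide_eq_false h2]
      refine Nat.add_lt_add_left
        (key a b (Sset Y) _ _ _ _
          (Or.inr (Or.inr (Or.inr (Or.inr (Or.inl ⟨?_, rfl, rfl, rfl, rfl⟩)))))) _
      rw [setA_subset_iff]; exact hA
    · have hYS : insert v2 (Sset Y) = Y := by
        rw [Sset, Finset.erase_eq_of_notMem h1]
        exact Finset.insert_erase h2
      unfold phi
      rw [Sset_erase_v2]
      rw [show decide (v2 ∈ Y.erase v2) = false by simp,
        show decide (v1 ∈ Y.erase v2) = false by simp [Finset.mem_erase, h1],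
        decide_eq_true h2, decide_eq_false h1]
      refine Nat.add_lt_add_left
        (key a b (Sset Y) _ _ _ _
          (Or.inr (Or.inr (Or.inr (Or.inr (Or.inr (Or.inr
            (Or.inl ⟨⟨?_, ?_⟩, rfl, rfl, rfl, rfl⟩)))))))) _
      · rw [setB_subset_iff]; exact hB
      · rw [hYS]; exact hne

/-- `G_I^M` has no directed cycle. -/
theorem stmt11 (n : ℕ) (a b e : Fin n → ℕ) (hab : ∀ i, 0 < a i + b i)
    (he : ∀ i, max (a i) (b i) < e i) :
    ¬ ∃ (L : ℕ) (c : ℕ → Finset (Fin 2 ⊕ Fin n)),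
      0 < L ∧ (∀ k < L, step a b (c k) (c (k+1))) ∧ c L = c 0 := by
  rintro ⟨L, c, hL, hstep, hclose⟩
  have hphi : ∀ k, k ≤ L → phi a b (c k) + k ≤ phi a b (c 0) := by
    intro k
    induction k with
    | zero => simp
    | succ m ih =>
      intro hm
      have h1 := phi_step a b (hstep m (by omega))
      have h2 := ih (by omega)
      omega
  have := hphi L le_rfl
  rw [hclose] at this
  omega
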